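/- arXiv:1409.3490 — 2 statements merged into one kernel-verified Lean document; each statement's English description precedes it below -/
import Mathlib

section
/- Let G be a finite group acting on a group A by automorphisms. If the semidirect product A ⋊ G has only finitely many conjugacy classes of finite subgroups, and A has finite index in A ⋊ G, then the first cohomology set H¹(G, A) is finite. -/
open SemidirectProduct

section Aux

variable {G A : Type*} [Group G] [Group A] [MulDistribMulAction G A]

abbrev Cocycle (G A : Type*) [Group G] [Group A] [MulDistribMulAction G A] :=
  {a : G → A // ∀ σ τ, a (σ * τ) = a σ * σ • a τ}

@[simp] lemma toMulAut_apply (g : G) (a : A) :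
    MulDistribMulAction.toMulAut G A g a = g • a := rfl

/-- the homomorphic section attached to a cocycle -/
def sec (a : Cocycle G A) : G →* A ⋊[MulDistribMulAction.toMulAut G A] G :=
  MonoidHom.mk' (fun σ => ⟨a.1 σ, σ⟩) (by
    intro σ τ
    ext
    · simp [a.2]
    · simp)

lemma sec_apply (a : Cocycle G A) (σ : G) : sec a σ = ⟨a.1 σ, σ⟩ := rfl

lemma sec_range_inj {a b : Cocycle G A} (h : (sec a).range = (sec b).range) : a = b := by
  apply Subtype.ext; funext σ
  have : sec a σ ∈ (sec b).range := h ▸ ⟨σ, rfl⟩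
  obtain ⟨τ, hτ⟩ := this
  have hr : τ = σ := congrArg SemidirectProduct.right hτ
  have hl := congrArg SemidirectProduct.left hτ
  simp [sec_apply, hr] at hl
  exact hl.symm

/-- conjugating a cocycle by an element of `A` -/
def conjCocycle (β : A) (b : Cocycle G A) : Cocycle G A :=
  ⟨fun σ => β * b.1 σ * (σ • β)⁻¹, by
    intro σ τ
    simp [b.2, smul_mul', mul_smul, mul_assoc]⟩

lemma range_conjCocycle (β : A) (b : Cocycle G A) :
    (sec (conjCocycle β b)).range =
      Subgroup.map (MulAut.conj (inl β : A ⋊[MulDistribMulAction.toMulAut G A] G)).toMonoidHom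
        (sec b).range := by
  have : sec (conjCocycle β b) =
      ((MulAut.conj (inl β : A ⋊[MulDistribMulAction.toMulAut G A] G)).toMonoidHom).comp
        (sec b) := by
    ext σ <;>
      simp [sec_apply, conjCocycle, MulAut.conj, mul_assoc, smul_inv']
  rw [this, MonoidHom.range_comp]

lemma map_conj_mul {H : Type*} [Group H] (x y : H) (S : Subgroup H) :
    Subgroup.map (MulAut.conj x).toMonoidHom (Subgroup.map (MulAut.conj y).toMonoidHom S)
      = Subgroup.map (MulAut.conj (x * y)).toMonoidHom S := by
  rw [Subgroup.map_map]
  congr 1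
  ext z
  simp [MulAut.conj, mul_assoc]

lemma map_conj_one {H : Type*} [Group H] (S : Subgroup H) :
    Subgroup.map (MulAut.conj (1 : H)).toMonoidHom S = S := by
  ext z; simp [MulAut.conj]

/-- the conjugacy relation on finite subgroups -/
def rconj (G A : Type*) [Group G] [Group A] [MulDistribMulAction G A] :
    {S : Subgroup (A ⋊[MulDistribMulAction.toMulAut G A] G) //
      (S : Set (A ⋊[MulDistribMulAction.toMulAut G A] G)).Finite} →
    {S : Subgroup (A ⋊[MulDistribMulAction.toMulAut G A] G) //
      (S : Set (A ⋊[MulDistribMulAction.toMulAut G A] G)).Finite} → Prop :=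
  fun F F' => ∃ g, F'.1 = Subgroup.map (MulAut.conj g).toMonoidHom F.1

lemma rconj_equiv : Equivalence (rconj G A) := by
  constructor
  · intro F; exact ⟨1, (map_conj_one F.1).symm⟩
  · rintro F F' ⟨g, hg⟩
    exact ⟨g⁻¹, by rw [hg, map_conj_mul, inv_mul_cancel, map_conj_one]⟩
  · rintro F F' F'' ⟨g, hg⟩ ⟨h, hh⟩
    exact ⟨h * g, by rw [hh, hg, map_conj_mul]⟩

/-- the cohomology relation on cocycles -/
def rcoh (G A : Type*) [Group G] [Group A] [MulDistribMulAction G A] :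
    Cocycle G A → Cocycle G A → Prop :=
  fun p q => ∃ α : A, ∀ σ, q.1 σ = α⁻¹ * p.1 σ * σ • α

end Aux




/-- Let a finite group `G` act on a group `A` by automorphisms. If the
semidirect product `A ⋊ G` has only finitely many conjugacy classes of finite
subgroups, and `A` (embedded via `inl`) has finite index in `A ⋊ G`, then the first
cohomology set `H¹(G,A)` (cocycles modulo the cohomology equivalence) is finite. -/
theorem h1_finite_of_finitely_many_conjugacy_classes (G A : Type*) [Group G] [Finite G]
    [Group A] [MulDistribMulAction G A]
    (hindex : (SemidirectProduct.inl (φ := MulDistribMulAction.toMulAut G A) :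
        A →* A ⋊[MulDistribMulAction.toMulAut G A] G).range.FiniteIndex)
    (hconj : Finite (Quot (fun F F' : {S : Subgroup (A ⋊[MulDistribMulAction.toMulAut G A] G) //
        (S : Set (A ⋊[MulDistribMulAction.toMulAut G A] G)).Finite} =>
      ∃ g, F'.1 = Subgroup.map (MulAut.conj g).toMonoidHom F.1))) :
    Finite (Quot (fun p q : {a : G → A // ∀ σ τ, a (σ * τ) = a σ * σ • a τ} =>
      ∃ α : A, ∀ σ, q.1 σ = α⁻¹ * p.1 σ * σ • α)) := by
  classical
  show Finite (Quot (rcoh G A))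
  have hC : Finite (Quot (rconj G A)) := hconj
  have hfin : ∀ a : Cocycle G A, ((sec a).range :
      Set (A ⋊[MulDistribMulAction.toMulAut G A] G)).Finite := fun a => by
    rw [MonoidHom.coe_range]; exact Set.finite_range _
  let Fb : Cocycle G A → {S : Subgroup (A ⋊[MulDistribMulAction.toMulAut G A] G) //
      (S : Set (A ⋊[MulDistribMulAction.toMulAut G A] G)).Finite} :=
    fun a => ⟨(sec a).range, hfin a⟩
  let f : Quot (rconj G A) × G → Quot (rcoh G A) := fun cg =>
    if h : ∃ a : Cocycle G A, (sec a).range =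
        Subgroup.map (MulAut.conj (inr cg.2 : A ⋊[MulDistribMulAction.toMulAut G A] G)).toMonoidHom
          cg.1.out.1
    then Quot.mk _ h.choose
    else Quot.mk _ ⟨fun _ => (1 : A), by simp⟩
  apply Finite.of_surjective f
  intro x
  obtain ⟨b, rfl⟩ := Quot.exists_rep x
  set c : Quot (rconj G A) := Quot.mk _ (Fb b) with hc
  have hout : Quot.mk (rconj G A) c.out = Quot.mk (rconj G A) (Fb b) := by
    rw [Quot.out_eq]
  have hrel : rconj G A c.out (Fb b) := rconj_equiv.eqvGen_iff.mp (Quot.eq.mp hout)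
  obtain ⟨x₀, hx₀⟩ := hrel
  set α := x₀.left with hα
  set g := x₀.right with hg
  have hx₀' : (sec b).range = Subgroup.map (MulAut.conj x₀).toMonoidHom c.out.1 := hx₀
  -- c.out.1 = map (conj x₀⁻¹) (sec b).range
  have hS : c.out.1 = Subgroup.map (MulAut.conj x₀⁻¹).toMonoidHom (sec b).range := by
    rw [hx₀', map_conj_mul, inv_mul_cancel, map_conj_one]
  have hmul : (inr g : A ⋊[MulDistribMulAction.toMulAut G A] G) * x₀⁻¹ = inl α⁻¹ := by
    have hx : x₀ = inl α * inr g := (inl_left_mul_inr_right x₀).symm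
    rw [hx, mul_inv_rev, ← mul_assoc, ← map_inv, ← map_mul]
    simp
  have hkey : Subgroup.map
      (MulAut.conj (inr g : A ⋊[MulDistribMulAction.toMulAut G A] G)).toMonoidHom c.out.1
      = (sec (conjCocycle α⁻¹ b)).range := by
    rw [hS, map_conj_mul, hmul, range_conjCocycle]
  have hex : ∃ a : Cocycle G A, (sec a).range =
      Subgroup.map (MulAut.conj (inr g : A ⋊[MulDistribMulAction.toMulAut G A] G)).toMonoidHom
        c.out.1 := ⟨conjCocycle α⁻¹ b, hkey.symm⟩
  refine ⟨(c, g), ?_⟩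
  have h1 : f (c, g) = Quot.mk (rcoh G A) hex.choose := dif_pos hex
  have hch : hex.choose = conjCocycle α⁻¹ b :=
    sec_range_inj (hex.choose_spec.trans hkey)
  rw [h1, hch]
  apply Quot.sound
  refine ⟨α⁻¹, fun σ => ?_⟩
  simp [conjCocycle, mul_assoc]
end

section
/- Let 0 → A → B → C → 0 be an exact sequence of groups with an action of a finite group G by automorphisms making all maps G-equivariant (A identified with a G-stable normal subgroup of B). If H¹(G, C) is finite and H¹(G, A_b) is finite for every cocycle b ∈ Z¹(G, B), then H¹(G, B) is finite. -/
private lemma h1_rel_equiv {G M : Type*} [Group G] [Group M] [MulDistribMulAction G M]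
    (P : (G → M) → Prop) :
    Equivalence (fun p q : {c : G → M // P c} =>
      ∃ γ : M, ∀ σ, q.1 σ = γ⁻¹ * p.1 σ * σ • γ) := by
  constructor
  · intro p; exact ⟨1, fun σ => by simp⟩
  · rintro p q ⟨γ, h⟩
    exact ⟨γ⁻¹, fun σ => by rw [h σ]; simp only [smul_inv', inv_inv]; group⟩
  · rintro p q s ⟨γ₁, h₁⟩ ⟨γ₂, h₂⟩
    exact ⟨γ₁ * γ₂, fun σ => by rw [h₂ σ, h₁ σ]; simp only [smul_mul', mul_inv_rev]; group⟩

/-- Let `1 → A → B → C → 1` be a `G`-equivariant exact sequence of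
groups (`G` finite acting by automorphisms, `A = ker π` for a `G`-equivariant
surjection `π : B → C`). If `H¹(G, C)` is finite and, for every cocycle
`b ∈ Z¹(G, B)`, the cohomology `H¹(G, A_b)` of the twisted `G`-group `A_b`
(action `σ * a = b σ * (σ • a) * (b σ)⁻¹`) is finite, then `H¹(G, B)` is finite. -/
theorem h1_finite_of_exact_sequence (G B C : Type*) [Group G] [Finite G] [Group B]
    [Group C] [MulDistribMulAction G B] [MulDistribMulAction G C]
    (π : B →* C) (hsurj : Function.Surjective π)
    (hequiv : ∀ (σ : G) (x : B), π (σ • x) = σ • π x)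
    (hC : Finite (Quot (fun p q : {c : G → C // ∀ σ τ, c (σ * τ) = c σ * σ • c τ} =>
      ∃ γ : C, ∀ σ, q.1 σ = γ⁻¹ * p.1 σ * σ • γ)))
    (hA : ∀ b : {b : G → B // ∀ σ τ, b (σ * τ) = b σ * σ • b τ},
      Finite (Quot (fun p q : {a : G → B // (∀ σ, a σ ∈ π.ker) ∧
          ∀ σ τ, a (σ * τ) = a σ * (b.1 σ * σ • a τ * (b.1 σ)⁻¹)} =>
        ∃ α ∈ π.ker, ∀ σ, q.1 σ = α⁻¹ * p.1 σ * (b.1 σ * σ • α * (b.1 σ)⁻¹)))) :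
    Finite (Quot (fun p q : {b : G → B // ∀ σ τ, b (σ * τ) = b σ * σ • b τ} =>
      ∃ β : B, ∀ σ, q.1 σ = β⁻¹ * p.1 σ * σ • β)) := by
  classical
  set ZB := {b : G → B // ∀ σ τ, b (σ * τ) = b σ * σ • b τ} with hZBdef
  set relB := fun p q : ZB => ∃ β : B, ∀ σ, q.1 σ = β⁻¹ * p.1 σ * σ • β with hrelB
  set ZC := {c : G → C // ∀ σ τ, c (σ * τ) = c σ * σ • c τ} with hZCdef
  set relC := fun p q : ZC => ∃ γ : C, ∀ σ, q.1 σ = γ⁻¹ * p.1 σ * σ • γ with hrelC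
  -- push forward cocycles along π
  let πZ' : ZB → ZC := fun b => ⟨fun σ => π (b.1 σ), by
    intro σ τ
    show π (b.1 (σ * τ)) = π (b.1 σ) * σ • π (b.1 τ)
    rw [b.2 σ τ, map_mul, hequiv]⟩
  let F : Quot relB → Quot relC := Quot.lift (fun b => Quot.mk relC (πZ' b)) (by
    rintro p q ⟨β, h⟩
    apply Quot.sound
    exact ⟨π β, fun σ => by simp only [πZ', h σ, map_mul, map_inv, hequiv]⟩)
  -- the twisted map g for each cocycle b
  have key : ∀ (b : ZB) (x : Quot relB), F x = F (Quot.mk relB b) →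
      ∃ a : {a : G → B // (∀ σ, a σ ∈ π.ker) ∧
          ∀ σ τ, a (σ * τ) = a σ * (b.1 σ * σ • a τ * (b.1 σ)⁻¹)},
        x = Quot.mk relB ⟨fun σ => a.1 σ * b.1 σ, by
          intro σ τ
          show a.1 (σ * τ) * b.1 (σ * τ) = a.1 σ * b.1 σ * σ • (a.1 τ * b.1 τ)
          rw [a.2.2 σ τ, b.2 σ τ, smul_mul']
          group⟩ := by
    intro b x hx
    obtain ⟨b', rfl⟩ := Quot.exists_rep x
    have h1 : Quot.mk relC (πZ' b') = Quot.mk relC (πZ' b) := hx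
    have h2 : relC (πZ' b') (πZ' b) :=
      ((h1_rel_equiv (G := G) (M := C) _).eqvGen_iff).mp (Quot.eqvGen_exact h1)
    obtain ⟨γ, hγ⟩ := h2
    obtain ⟨β, rfl⟩ := hsurj γ
    -- b'' σ = β⁻¹ * b' σ * σ • β
    have hb''coc : ∀ σ τ, (fun σ => β⁻¹ * b'.1 σ * σ • β) (σ * τ)
        = (fun σ => β⁻¹ * b'.1 σ * σ • β) σ * σ • (fun σ => β⁻¹ * b'.1 σ * σ • β) τ := by
      intro σ τ
      show β⁻¹ * b'.1 (σ * τ) * (σ * τ) • β = (β⁻¹ * b'.1 σ * σ • β) * σ • (β⁻¹ * b'.1 τ * τ • β)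
      rw [b'.2 σ τ, mul_smul]
      simp only [smul_mul', smul_inv']
      group
    set b'' : ZB := ⟨fun σ => β⁻¹ * b'.1 σ * σ • β, hb''coc⟩ with hb''
    have hπ : ∀ σ, π (b''.1 σ) = π (b.1 σ) := by
      intro σ
      have := hγ σ
      simp only [πZ'] at this
      simp only [hb'', map_mul, map_inv, hequiv, this]
    refine ⟨⟨fun σ => b''.1 σ * (b.1 σ)⁻¹, ?_, ?_⟩, ?_⟩
    · intro σ
      simp only [MonoidHom.mem_ker, map_mul, map_inv, hπ σ, mul_inv_cancel]
    · intro σ τ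
      show (β⁻¹ * b'.1 (σ * τ) * (σ * τ) • β) * (b.1 (σ * τ))⁻¹
          = (β⁻¹ * b'.1 σ * σ • β) * (b.1 σ)⁻¹ *
            (b.1 σ * σ • ((β⁻¹ * b'.1 τ * τ • β) * (b.1 τ)⁻¹) * (b.1 σ)⁻¹)
      rw [b'.2 σ τ, b.2 σ τ, mul_smul]
      simp only [smul_mul', smul_inv', mul_inv_rev]
      group
    · have e1 : Quot.mk relB b' = Quot.mk relB b'' := Quot.sound ⟨β, fun σ => rfl⟩
      rw [e1]
      congr 1
      apply Subtype.ext
      funext σ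
      simp
  -- each fiber of F is finite
  have fibfin : ∀ c : Quot relC, (F ⁻¹' {c}).Finite := by
    intro c
    by_cases h : (F ⁻¹' {c}).Nonempty
    · obtain ⟨x, hx⟩ := h
      obtain ⟨b, rfl⟩ := Quot.exists_rep x
      have hfin := hA b
      set relA := fun p q : {a : G → B // (∀ σ, a σ ∈ π.ker) ∧
          ∀ σ τ, a (σ * τ) = a σ * (b.1 σ * σ • a τ * (b.1 σ)⁻¹)} =>
        ∃ α ∈ π.ker, ∀ σ, q.1 σ = α⁻¹ * p.1 σ * (b.1 σ * σ • α * (b.1 σ)⁻¹) with hrelA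
    -- map from H¹(A_b) to H¹(B)
      let gH : Quot relA → Quot relB := Quot.lift
        (fun a => Quot.mk relB ⟨fun σ => a.1 σ * b.1 σ, by
          intro σ τ
          show a.1 (σ * τ) * b.1 (σ * τ) = a.1 σ * b.1 σ * σ • (a.1 τ * b.1 τ)
          rw [a.2.2 σ τ, b.2 σ τ, smul_mul']
          group⟩)
        (by
          rintro p q ⟨α, hαk, hα⟩
          apply Quot.sound
          refine ⟨α, fun σ => ?_⟩
          simp only [hα σ]
          group)
      apply Set.Finite.subset (Set.finite_range gH)
      intro y hy
      have hy' : F y = F (Quot.mk relB b) := by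
        simp only [Set.mem_preimage, Set.mem_singleton_iff] at hy hx
        rw [hy, hx]
      obtain ⟨a, ha⟩ := key b y hy'
      exact ⟨Quot.mk relA a, ha.symm⟩
    · rw [Set.not_nonempty_iff_eq_empty] at h
      rw [h]; exact Set.finite_empty
  have : (Set.univ : Set (Quot relB)).Finite := by
    have hu : (Set.univ : Set (Quot relB)) = ⋃ c : Quot relC, F ⁻¹' {c} := by
      ext x; simp
    rw [hu]
    exact Set.finite_iUnion fibfin
  exact Set.finite_univ_iff.mp this
end
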